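/- arXiv:2411.02721 — 2 statements merged into one kernel-verified Lean document; each statement's English description precedes it below -/
import Mathlib

section
/- Suppose x̄ is a 𝔷-uniform Slater point with associated neighborhood U. Then the radius function, viewed as the map (x, v, c) ↦ ρ_c(x, v) from U × S^{m−1} × 𝒞 to [0, ∞], is measurable with respect to the product of the Borel σ-algebras; indeed, for every ν ≥ 0, {(x, v, c) ∈ U × S^{m−1} × 𝒞 : ρ_c(x, v) > ν} = {(x, v, c) ∈ U × S^{m−1} × 𝒞 : g(x, ν·𝔏(c)v + 𝔷(c)) < 0}. -/
open MeasureTheory Real Set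
open scoped RealInnerProductSpace ENNReal

noncomputable section

/-- The density of the chi distribution with `m` degrees of freedom. -/
def chiPDF (m : ℕ) (r : ℝ) : ℝ :=
  (2 ^ (1 - (m : ℝ) / 2) / Real.Gamma ((m : ℝ) / 2)) * r ^ (m - 1) * Real.exp (-r ^ 2 / 2)

/-- Matrix applied to a Euclidean vector. -/
def mApp {m : ℕ} (A : Matrix (Fin m) (Fin m) ℝ) (v : EuclideanSpace ℝ (Fin m)) :
    EuclideanSpace ℝ (Fin m) :=
  Matrix.toEuclideanLin A v

/-- The set `{r ≥ 0 : g(x, r·𝔏(c)v + 𝔷(c)) ≤ 0}`. -/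
def radialSet {n m p : ℕ} (g : EuclideanSpace ℝ (Fin n) → EuclideanSpace ℝ (Fin m) → ℝ)
    (z : EuclideanSpace ℝ (Fin p) → EuclideanSpace ℝ (Fin m))
    (L : EuclideanSpace ℝ (Fin p) → Matrix (Fin m) (Fin m) ℝ)
    (c : EuclideanSpace ℝ (Fin p)) (x : EuclideanSpace ℝ (Fin n))
    (v : EuclideanSpace ℝ (Fin m)) : Set ℝ :=
  {r : ℝ | 0 ≤ r ∧ g x (r • mApp (L c) v + z c) ≤ 0}

/-- The parametric radial probability function `e_c(x, v)`. -/
def radialE {n m p : ℕ} (g : EuclideanSpace ℝ (Fin n) → EuclideanSpace ℝ (Fin m) → ℝ)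
    (z : EuclideanSpace ℝ (Fin p) → EuclideanSpace ℝ (Fin m))
    (L : EuclideanSpace ℝ (Fin p) → Matrix (Fin m) (Fin m) ℝ)
    (c : EuclideanSpace ℝ (Fin p)) (x : EuclideanSpace ℝ (Fin n))
    (v : EuclideanSpace ℝ (Fin m)) : ℝ :=
  ∫ r in radialSet g z L c x v, chiPDF m r

/-- The radius function `ρ_c(x, v) ∈ [0, ∞]`,
the supremum of `{r ≥ 0 : g(x, r·𝔏(c)v + 𝔷(c)) ≤ 0}`. -/
def rho {n m p : ℕ} (g : EuclideanSpace ℝ (Fin n) → EuclideanSpace ℝ (Fin m) → ℝ)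
    (z : EuclideanSpace ℝ (Fin p) → EuclideanSpace ℝ (Fin m))
    (L : EuclideanSpace ℝ (Fin p) → Matrix (Fin m) (Fin m) ℝ)
    (c : EuclideanSpace ℝ (Fin p)) (x : EuclideanSpace ℝ (Fin n))
    (v : EuclideanSpace ℝ (Fin m)) : ℝ≥0∞ :=
  sSup (ENNReal.ofReal '' radialSet g z L c x v)

/-! Along a ray, `φ r := g(x, r • 𝔏(c) v + 𝔷(c))` is convex and continuous with `φ 0 < 0` by the
Slater condition. Convexity makes `φ < 0` on `[0, s)` as soon as `φ s ≤ 0`, and continuity makes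
`{φ < 0}` open, so `ν < ρ` exactly when `φ ν < 0`. Hence every superlevel set `{ρ > ν}` is the
preimage of `(-∞, 0)` under a measurable map, which gives measurability of `ρ`. -/

open Filter Topology

theorem ConvexOn.lt_zero_of_lt_of_le_zero {φ : ℝ → ℝ} (hφ : ConvexOn ℝ (Ici 0) φ)
    (h₀ : φ 0 < 0) {s ν : ℝ} (hs : φ s ≤ 0) (hν : 0 ≤ ν) (hνs : ν < s) : φ ν < 0 := by
  have hs₀ : 0 < s := hν.trans_lt hνs
  set t := ν / s
  have ht₀ : 0 ≤ t := div_nonneg hν hs₀.le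
  have ht₁ : t < 1 := (div_lt_one hs₀).2 hνs
  have hν_eq : (1 - t) • (0 : ℝ) + t • s = ν := by
    simp only [smul_eq_mul, mul_zero, zero_add, t, div_mul_cancel₀ ν hs₀.ne']
  calc φ ν = φ ((1 - t) • 0 + t • s) := by rw [hν_eq]
    _ ≤ (1 - t) • φ 0 + t • φ s :=
      hφ.2 self_mem_Ici hs₀.le (by linarith) ht₀ (by ring)
    _ < 0 := by
      simp only [smul_eq_mul]
      nlinarith [mul_nonneg ht₀ (neg_nonneg.2 hs)]

theorem ENNReal.ofReal_lt_sSup_image_ofReal_iff {S : Set ℝ} {ν : ℝ} (hν : 0 ≤ ν) :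
    ENNReal.ofReal ν < sSup (ENNReal.ofReal '' S) ↔ ∃ s ∈ S, ν < s := by
  simp only [lt_sSup_iff, mem_image, exists_exists_and_eq_and,
    ENNReal.ofReal_lt_ofReal_iff_of_nonneg hν]

theorem ofReal_lt_sSup_sublevel_iff {φ : ℝ → ℝ} (hφ : ConvexOn ℝ (Ici 0) φ)
    (hφc : Continuous φ) (h₀ : φ 0 < 0) {ν : ℝ} (hν : 0 ≤ ν) :
    ENNReal.ofReal ν < sSup (ENNReal.ofReal '' {r | 0 ≤ r ∧ φ r ≤ 0}) ↔ φ ν < 0 := by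
  rw [ENNReal.ofReal_lt_sSup_image_ofReal_iff hν]
  constructor
  · rintro ⟨s, ⟨-, hs⟩, hνs⟩
    exact hφ.lt_zero_of_lt_of_le_zero h₀ hs hν hνs
  · intro hφν
    have hnear : ∀ᶠ r in 𝓝[>] ν, φ r < 0 :=
      nhdsWithin_le_nhds ((hφc.tendsto ν).eventually (gt_mem_nhds hφν))
    obtain ⟨s, hs, hνs⟩ := (hnear.and self_mem_nhdsWithin).exists
    exact ⟨s, ⟨hν.trans hνs.le, hs.le⟩, hνs⟩

theorem ofReal_lt_rho_iff {n m p : ℕ} {g : EuclideanSpace ℝ (Fin n) → EuclideanSpace ℝ (Fin m) → ℝ}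
    {z : EuclideanSpace ℝ (Fin p) → EuclideanSpace ℝ (Fin m)}
    {L : EuclideanSpace ℝ (Fin p) → Matrix (Fin m) (Fin m) ℝ}
    {c : EuclideanSpace ℝ (Fin p)} {x : EuclideanSpace ℝ (Fin n)} (v : EuclideanSpace ℝ (Fin m))
    (hgx : Continuous (g x)) (hconv : ConvexOn ℝ univ (g x)) (hslater : g x (z c) < 0)
    {ν : ℝ} (hν : 0 ≤ ν) :
    ENNReal.ofReal ν < rho g z L c x v ↔ g x (ν • mApp (L c) v + z c) < 0 := by
  have hline : (fun r : ℝ => g x (r • mApp (L c) v + z c)) =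
      g x ∘ AffineMap.lineMap (z c) (mApp (L c) v + z c) := by
    ext r
    simp [AffineMap.lineMap_apply]
  refine ofReal_lt_sSup_sublevel_iff (φ := fun r => g x (r • mApp (L c) v + z c)) ?_ ?_
    (by simpa using hslater) hν
  · rw [hline]
    exact (hconv.comp_affineMap _).subset (subset_univ _) (convex_Ici 0)
  · rw [hline]
    exact hgx.comp AffineMap.lineMap_continuous

theorem ENNReal.measurable_of_ofReal_lt_iff {α : Type*} [MeasurableSpace α] {F : α → ℝ≥0∞}
    (G : ℝ → α → ℝ) (hG : ∀ ν, Measurable (G ν))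
    (hFG : ∀ ν, 0 ≤ ν → ∀ a, ENNReal.ofReal ν < F a ↔ G ν a < 0) : Measurable F := by
  refine measurable_of_Ioi fun b => ?_
  rcases eq_or_ne b ⊤ with rfl | hb
  · simp
  obtain ⟨ν, hν, rfl⟩ : ∃ ν, 0 ≤ ν ∧ ENNReal.ofReal ν = b :=
    ⟨b.toReal, ENNReal.toReal_nonneg, ENNReal.ofReal_toReal hb⟩
  have hpre : F ⁻¹' Ioi (ENNReal.ofReal ν) = G ν ⁻¹' Iio 0 := by
    ext a
    exact hFG ν hν a
  rw [hpre]
  exact hG ν measurableSet_Iio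

theorem Measurable.mApp {α : Type*} [MeasurableSpace α] {m : ℕ}
    {A : α → Matrix (Fin m) (Fin m) ℝ} {f : α → EuclideanSpace ℝ (Fin m)}
    (hA : ∀ i j, Measurable fun a => A a i j) (hf : Measurable f) :
    Measurable fun a => _root_.mApp (A a) (f a) := by
  have hcoord : (fun a => _root_.mApp (A a) (f a)) =
      fun a => WithLp.toLp 2 fun i => ∑ j, A a i j * f a j := by
    ext a i
    simp [_root_.mApp, Matrix.mulVec, dotProduct]
  rw [hcoord]
  exact (WithLp.measurable_toLp 2 _).comp <| measurable_pi_lambda _ fun i =>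
    Finset.measurable_sum _ fun j _ =>
      (hA i j).mul ((measurable_pi_apply j).comp ((WithLp.measurable_ofLp 2 _).comp hf))

theorem rho_measurable_and_superlevel_general
    {n m p : ℕ}
    (𝒞 : Set (EuclideanSpace ℝ (Fin p)))
    (z : EuclideanSpace ℝ (Fin p) → EuclideanSpace ℝ (Fin m))
    (L : EuclideanSpace ℝ (Fin p) → Matrix (Fin m) (Fin m) ℝ)
    (hz : Measurable fun c : 𝒞 => z c)
    (hL : ∀ i j, Measurable fun c : 𝒞 => L c i j)
    (g : EuclideanSpace ℝ (Fin n) → EuclideanSpace ℝ (Fin m) → ℝ)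
    (hg : Continuous (Function.uncurry g))
    (hconv : ∀ x, ConvexOn ℝ Set.univ (g x))
    (U : Set (EuclideanSpace ℝ (Fin n)))
    (γ₀ : ℝ) (hγ₀ : 0 < γ₀) (hSlater : ∀ x ∈ U, ∀ c ∈ 𝒞, g x (z c) < -γ₀) :
    (Measurable fun q : U × Metric.sphere (0 : EuclideanSpace ℝ (Fin m)) 1 × 𝒞 =>
      rho g z L (↑q.2.2) (↑q.1) (↑q.2.1)) ∧
    ∀ ν : ℝ, 0 ≤ ν →
      {q : EuclideanSpace ℝ (Fin n) × EuclideanSpace ℝ (Fin m) × EuclideanSpace ℝ (Fin p) | q.1 ∈ U ∧ q.2.1 ∈ Metric.sphere (0 : EuclideanSpace ℝ (Fin m)) 1 ∧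
          q.2.2 ∈ 𝒞 ∧ ENNReal.ofReal ν < rho g z L q.2.2 q.1 q.2.1} =
      {q : EuclideanSpace ℝ (Fin n) × EuclideanSpace ℝ (Fin m) × EuclideanSpace ℝ (Fin p) | q.1 ∈ U ∧ q.2.1 ∈ Metric.sphere (0 : EuclideanSpace ℝ (Fin m)) 1 ∧
          q.2.2 ∈ 𝒞 ∧ g q.1 (ν • mApp (L q.2.2) q.2.1 + z q.2.2) < 0} := by
  have hsuper : ∀ ν, 0 ≤ ν → ∀ x ∈ U, ∀ c ∈ 𝒞, ∀ v,
      ENNReal.ofReal ν < rho g z L c x v ↔ g x (ν • mApp (L c) v + z c) < 0 :=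
    fun ν hν x hx c hc v => ofReal_lt_rho_iff v (hg.uncurry_left x) (hconv x)
      ((hSlater x hx c hc).trans (neg_neg_of_pos hγ₀)) hν
  refine ⟨ENNReal.measurable_of_ofReal_lt_iff
    (fun ν q => g q.1 (ν • mApp (L q.2.2) q.2.1 + z q.2.2)) (fun ν => ?_)
    (fun ν hν q => hsuper ν hν _ q.1.2 _ q.2.2.2 _), fun ν hν => ?_⟩
  · have hc : Measurable fun q : U × Metric.sphere (0 : EuclideanSpace ℝ (Fin m)) 1 × 𝒞 => q.2.2 :=
      measurable_snd.snd
    have hv : Measurable fun q : U × Metric.sphere (0 : EuclideanSpace ℝ (Fin m)) 1 × 𝒞 =>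
        (q.2.1 : EuclideanSpace ℝ (Fin m)) :=
      measurable_subtype_coe.comp measurable_snd.fst
    exact hg.measurable.comp ((measurable_subtype_coe.comp measurable_fst).prodMk
      (((Measurable.mApp (fun i j => (hL i j).comp hc) hv).const_smul ν).add (hz.comp hc)))
  · ext q
    exact and_congr_right fun hx => and_congr_right fun _ => and_congr_right fun hc =>
      hsuper ν hν _ hx _ hc _

/-- on the Slater neighborhood `U`, the radius function
`(x, v, c) ↦ ρ_c(x, v)` is Borel measurable on `U × S^{m-1} × 𝒞`, and for
every `ν ≥ 0` its strict superlevel set is described by a strict inequality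
on `g`. -/
theorem rho_measurable_and_superlevel
    {n m p : ℕ} (hn : 0 < n) (hm : 0 < m) (hp : 0 < p)
    (𝒞 : Set (EuclideanSpace ℝ (Fin p))) (h𝒞 : MeasurableSet 𝒞)
    (z : EuclideanSpace ℝ (Fin p) → EuclideanSpace ℝ (Fin m))
    (L : EuclideanSpace ℝ (Fin p) → Matrix (Fin m) (Fin m) ℝ)
    (hz : Measurable fun c : 𝒞 => z c)
    (hL : ∀ i j, Measurable fun c : 𝒞 => L c i j)
    (g : EuclideanSpace ℝ (Fin n) → EuclideanSpace ℝ (Fin m) → ℝ)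
    (hg : Continuous (Function.uncurry g))
    (hconv : ∀ x, ConvexOn ℝ Set.univ (g x))
    (xbar : EuclideanSpace ℝ (Fin n)) (U : Set (EuclideanSpace ℝ (Fin n))) (hU : IsOpen U) (hxU : xbar ∈ U)
    (γ₀ : ℝ) (hγ₀ : 0 < γ₀) (hSlater : ∀ x ∈ U, ∀ c ∈ 𝒞, g x (z c) < -γ₀) :
    (Measurable fun q : U × Metric.sphere (0 : EuclideanSpace ℝ (Fin m)) 1 × 𝒞 =>
      rho g z L (↑q.2.2) (↑q.1) (↑q.2.1)) ∧
    ∀ ν : ℝ, 0 ≤ ν →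
      {q : EuclideanSpace ℝ (Fin n) × EuclideanSpace ℝ (Fin m) × EuclideanSpace ℝ (Fin p) | q.1 ∈ U ∧ q.2.1 ∈ Metric.sphere (0 : EuclideanSpace ℝ (Fin m)) 1 ∧
          q.2.2 ∈ 𝒞 ∧ ENNReal.ofReal ν < rho g z L q.2.2 q.1 q.2.1} =
      {q : EuclideanSpace ℝ (Fin n) × EuclideanSpace ℝ (Fin m) × EuclideanSpace ℝ (Fin p) | q.1 ∈ U ∧ q.2.1 ∈ Metric.sphere (0 : EuclideanSpace ℝ (Fin m)) 1 ∧
          q.2.2 ∈ 𝒞 ∧ g q.1 (ν • mApp (L q.2.2) q.2.1 + z q.2.2) < 0} :=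
  rho_measurable_and_superlevel_general 𝒞 z L hz hL g hg hconv U γ₀ hγ₀ hSlater

end
end

section
/- Suppose x̄ is a 𝔷-uniform Slater point with associated neighborhood U. Then for every fixed c ∈ 𝒞, the radius function is sequentially continuous on U × S^{m−1} as a map into [0, ∞]: for every sequence (x_k, v_k) → (x, v) in U × S^{m−1}, one has ρ_c(x_k, v_k) → ρ_c(x, v). -/
open MeasureTheory Real Set
open scoped RealInnerProductSpace ENNReal

noncomputable section

/-! Along each ray the constraint is a convex function `φ` of the radius with `φ 0 < 0`, so
`φ < 0` on `[0, ρ)` and `φ > 0` beyond `ρ` whenever `ρ < ∞`. Hence `ρ < b` and `a < ρ` are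
both witnessed by the sign of `φ` at a single radius, and these strict signs persist under
pointwise convergence of the constraint as `(x_k, v_k) → (x, v)`. -/

def sublevelRadius (φ : ℝ → ℝ) : ℝ≥0∞ :=
  sSup (ENNReal.ofReal '' {r | 0 ≤ r ∧ φ r ≤ 0})

lemma rho_eq_sublevelRadius {n m p : ℕ}
    (g : EuclideanSpace ℝ (Fin n) → EuclideanSpace ℝ (Fin m) → ℝ)
    (z : EuclideanSpace ℝ (Fin p) → EuclideanSpace ℝ (Fin m))
    (L : EuclideanSpace ℝ (Fin p) → Matrix (Fin m) (Fin m) ℝ)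
    (c : EuclideanSpace ℝ (Fin p)) (x : EuclideanSpace ℝ (Fin n))
    (v : EuclideanSpace ℝ (Fin m)) :
    rho g z L c x v = sublevelRadius (fun r => g x (r • mApp (L c) v + z c)) :=
  rfl

lemma ConvexOn.comp_smul_add {E : Type*} [AddCommGroup E] [Module ℝ E] {f : E → ℝ}
    (hf : ConvexOn ℝ univ f) (w z₀ : E) : ConvexOn ℝ univ (fun r : ℝ => f (r • w + z₀)) := by
  simpa [Function.comp_def, add_comm] using
    (hf.translate_right z₀).comp_linearMap (LinearMap.toSpanSingleton ℝ E w)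

lemma ConvexOn.neg_of_lt_of_nonpos {φ : ℝ → ℝ} (hφ : ConvexOn ℝ (Ici 0) φ) (h0 : φ 0 < 0)
    {r s : ℝ} (hr : 0 ≤ r) (hrs : r < s) (hs : φ s ≤ 0) : φ r < 0 := by
  have hs0 : 0 < s := hr.trans_lt hrs
  have ht : r / s < 1 := (div_lt_one hs0).2 hrs
  have hchord := hφ.2 (mem_Ici.2 le_rfl) hs0.le (sub_nonneg.2 ht.le) (div_nonneg hr hs0.le)
    (sub_add_cancel 1 (r / s))
  rw [smul_zero, zero_add, smul_eq_mul, div_mul_cancel₀ r hs0.ne', smul_eq_mul,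
    smul_eq_mul] at hchord
  have h1 : (1 - r / s) * φ 0 < 0 := mul_neg_of_pos_of_neg (sub_pos.2 ht) h0
  have h2 : r / s * φ s ≤ 0 := mul_nonpos_of_nonneg_of_nonpos (div_nonneg hr hs0.le) hs
  linarith

open Filter Topology

namespace sublevelRadius

variable {φ : ℝ → ℝ}

lemma ofReal_le {r : ℝ} (hr : 0 ≤ r) (hφr : φ r ≤ 0) : ENNReal.ofReal r ≤ sublevelRadius φ :=
  le_sSup ⟨r, ⟨hr, hφr⟩, rfl⟩

lemma le_ofReal_of_pos (hφ : ConvexOn ℝ (Ici 0) φ) (h0 : φ 0 < 0) {r : ℝ} (hr : 0 ≤ r)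
    (hφr : 0 < φ r) : sublevelRadius φ ≤ ENNReal.ofReal r := by
  refine sSup_le ?_
  rintro _ ⟨s, ⟨hs, hφs⟩, rfl⟩
  refine ENNReal.ofReal_le_ofReal (le_of_not_gt fun hrs => ?_)
  exact (hφ.neg_of_lt_of_nonpos h0 hr hrs hφs).not_gt hφr

lemma exists_neg_of_lt (hφ : ConvexOn ℝ (Ici 0) φ) (h0 : φ 0 < 0) {a : ℝ≥0∞}
    (ha : a < sublevelRadius φ) : ∃ r, 0 ≤ r ∧ a < ENNReal.ofReal r ∧ φ r < 0 := by
  obtain ⟨_, ⟨s, ⟨hs, hφs⟩, rfl⟩, has⟩ := lt_sSup_iff.mp ha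
  have haT : a ≠ ⊤ := has.ne_top
  rw [ENNReal.lt_ofReal_iff_toReal_lt haT] at has
  have ha0 : 0 ≤ a.toReal := ENNReal.toReal_nonneg
  refine ⟨(a.toReal + s) / 2, by linarith, ?_, hφ.neg_of_lt_of_nonpos h0 (by linarith)
    (by linarith) hφs⟩
  rw [ENNReal.lt_ofReal_iff_toReal_lt haT]
  linarith

lemma exists_pos_of_lt {b : ℝ≥0∞} (hb : sublevelRadius φ < b) :
    ∃ r, 0 ≤ r ∧ ENNReal.ofReal r < b ∧ 0 < φ r := by
  obtain ⟨r, hr, hφr, hrb⟩ := ENNReal.lt_iff_exists_real_btwn.mp hb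
  exact ⟨r, hr, hrb, lt_of_not_ge fun h => (ofReal_le hr h).not_gt hφr⟩

theorem tendsto {ι : Type*} {l : Filter ι} {Φ : ι → ℝ → ℝ}
    (hΦ : ∀ r, Tendsto (fun i => Φ i r) l (𝓝 (φ r)))
    (hΦconv : ∀ i, ConvexOn ℝ (Ici 0) (Φ i)) (hΦ0 : ∀ i, Φ i 0 < 0)
    (hφconv : ConvexOn ℝ (Ici 0) φ) (hφ0 : φ 0 < 0) :
    Tendsto (fun i => sublevelRadius (Φ i)) l (𝓝 (sublevelRadius φ)) := by
  refine tendsto_order.2 ⟨fun a ha => ?_, fun b hb => ?_⟩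
  · obtain ⟨r, hr, har, hφr⟩ := exists_neg_of_lt hφconv hφ0 ha
    filter_upwards [(hΦ r).eventually_lt_const hφr] with i hi
    exact har.trans_le (ofReal_le hr hi.le)
  · obtain ⟨r, hr, hrb, hφr⟩ := exists_pos_of_lt hb
    filter_upwards [(hΦ r).eventually_const_lt hφr] with i hi
    exact (le_ofReal_of_pos (hΦconv i) (hΦ0 i) hr hi).trans_lt hrb

end sublevelRadius

theorem rho_seq_continuous_general
    {n m p : ℕ}
    (𝒞 : Set (EuclideanSpace ℝ (Fin p)))
    (z : EuclideanSpace ℝ (Fin p) → EuclideanSpace ℝ (Fin m))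
    (L : EuclideanSpace ℝ (Fin p) → Matrix (Fin m) (Fin m) ℝ)
    (g : EuclideanSpace ℝ (Fin n) → EuclideanSpace ℝ (Fin m) → ℝ)
    (hg : Continuous (Function.uncurry g))
    (hconv : ∀ x, ConvexOn ℝ Set.univ (g x))
    (U : Set (EuclideanSpace ℝ (Fin n)))
    (γ₀ : ℝ) (hγ₀ : 0 < γ₀) (hSlater : ∀ x ∈ U, ∀ c ∈ 𝒞, g x (z c) < -γ₀) :
    ∀ c ∈ 𝒞, ∀ x ∈ U, ∀ v ∈ Metric.sphere (0 : EuclideanSpace ℝ (Fin m)) 1,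
      ∀ (xk : ℕ → EuclideanSpace ℝ (Fin n)) (vk : ℕ → EuclideanSpace ℝ (Fin m)),
        (∀ k, xk k ∈ U) → (∀ k, vk k ∈ Metric.sphere (0 : EuclideanSpace ℝ (Fin m)) 1) →
        Filter.Tendsto xk Filter.atTop (nhds x) →
        Filter.Tendsto vk Filter.atTop (nhds v) →
        Filter.Tendsto (fun k => rho g z L c (xk k) (vk k)) Filter.atTop
          (nhds (rho g z L c x v)) := by
  intro c hc x hx v _ xk vk hxkU _ hxk hvk
  have hneg : ∀ y ∈ U, g y (z c) < 0 := fun y hy =>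
    (hSlater y hy c hc).trans (neg_neg_of_pos hγ₀)
  have hconvRay : ∀ y u, ConvexOn ℝ (Ici 0) (fun r : ℝ => g y (r • mApp (L c) u + z c)) :=
    fun y u => ((hconv y).comp_smul_add _ _).subset (subset_univ _) (convex_Ici 0)
  have hA : Continuous (mApp (L c)) := LinearMap.continuous_of_finiteDimensional _
  simp only [rho_eq_sublevelRadius]
  refine sublevelRadius.tendsto (fun r => ?_) (fun k => hconvRay _ _)
    (fun k => by simpa using hneg _ (hxkU k)) (hconvRay _ _) (by simpa using hneg x hx)
  exact (hg.tendsto _).comp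
    (hxk.prodMk_nhds ((((hA.tendsto v).comp hvk).const_smul r).add_const (z c)))

/-- on the Slater neighborhood `U`, for fixed `c ∈ 𝒞`, the radius
function is sequentially continuous on `U × S^{m-1}` as a map into `[0, ∞]`. -/
theorem rho_seq_continuous
    {n m p : ℕ} (hn : 0 < n) (hm : 0 < m) (hp : 0 < p)
    (𝒞 : Set (EuclideanSpace ℝ (Fin p))) (h𝒞 : MeasurableSet 𝒞)
    (z : EuclideanSpace ℝ (Fin p) → EuclideanSpace ℝ (Fin m))
    (L : EuclideanSpace ℝ (Fin p) → Matrix (Fin m) (Fin m) ℝ)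
    (hz : Measurable fun c : 𝒞 => z c)
    (hL : ∀ i j, Measurable fun c : 𝒞 => L c i j)
    (g : EuclideanSpace ℝ (Fin n) → EuclideanSpace ℝ (Fin m) → ℝ)
    (hg : Continuous (Function.uncurry g))
    (hconv : ∀ x, ConvexOn ℝ Set.univ (g x))
    (xbar : EuclideanSpace ℝ (Fin n)) (U : Set (EuclideanSpace ℝ (Fin n))) (hU : IsOpen U) (hxU : xbar ∈ U)
    (γ₀ : ℝ) (hγ₀ : 0 < γ₀) (hSlater : ∀ x ∈ U, ∀ c ∈ 𝒞, g x (z c) < -γ₀) :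
    ∀ c ∈ 𝒞, ∀ x ∈ U, ∀ v ∈ Metric.sphere (0 : EuclideanSpace ℝ (Fin m)) 1,
      ∀ (xk : ℕ → EuclideanSpace ℝ (Fin n)) (vk : ℕ → EuclideanSpace ℝ (Fin m)),
        (∀ k, xk k ∈ U) → (∀ k, vk k ∈ Metric.sphere (0 : EuclideanSpace ℝ (Fin m)) 1) →
        Filter.Tendsto xk Filter.atTop (nhds x) →
        Filter.Tendsto vk Filter.atTop (nhds v) →
        Filter.Tendsto (fun k => rho g z L c (xk k) (vk k)) Filter.atTop
          (nhds (rho g z L c x v)) :=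
  rho_seq_continuous_general 𝒞 z L g hg hconv U γ₀ hγ₀ hSlater

end
end
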